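/- arXiv:1509.02188 — 13 statements merged into one kernel-verified Lean document; each statement's English description precedes it below -/
import Mathlib

section
/- Let R be a topological ring with identity and let I, J be two-sided ideals of R that are topologically co-maximal. Then the set IJ + JI (the sum of the set of finite sums of products ij with i ∈ I, j ∈ J and the set of finite sums of products ji) is dense in I ∩ J. In particular, if I and J are in addition closed, then the closure of IJ + JI equals I ∩ J. -/
open Pointwise

/-! Since `1` lies in the closure of `I + J`, every `x` lies in the closure of `x (I + J)`
by continuity of left multiplication. For `x ∈ I ∩ J` we have `x (a + b) = x b + x a` with
`x b ∈ IJ` and `x a ∈ JI` whenever `a ∈ I`, `b ∈ J`. The reverse inclusion for closed ideals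
holds because `IJ + JI ⊆ I ∩ J`. -/

theorem mem_closure_smul_of_one_mem_closure {M : Type*} [Monoid M] [TopologicalSpace M]
    [ContinuousMul M] {s : Set M} (h : 1 ∈ closure s) (x : M) : x ∈ closure (x • s) := by
  rw [← Set.image_smul]
  exact image_closure_subset_closure_image (continuous_const_mul x) ⟨1, h, mul_one x⟩

namespace TwoSidedIdeal

variable {R : Type*} [Ring R]

/-- The product `IJ` of the paper. -/
def productSums (I J : TwoSidedIdeal R) : AddSubmonoid R :=
  AddSubmonoid.closure {x : R | ∃ i ∈ I, ∃ j ∈ J, x = i * j}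

theorem coe_productSums_subset_inter (I J : TwoSidedIdeal R) :
    (productSums I J : Set R) ⊆ I ∩ J := by
  refine AddSubmonoid.closure_le (S := (I.asIdeal ⊓ J.asIdeal).toAddSubmonoid).mpr ?_
  rintro _ ⟨i, hi, j, hj, rfl⟩
  exact ⟨I.mul_mem_right _ _ hi, J.mul_mem_left _ _ hj⟩

theorem productSums_add_productSums_subset_inter (I J : TwoSidedIdeal R) :
    (productSums I J : Set R) + productSums J I ⊆ I ∩ J := by
  rintro _ ⟨a, ha, b, hb, rfl⟩
  have ha := coe_productSums_subset_inter I J ha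
  have hb := coe_productSums_subset_inter J I hb
  exact ⟨I.add_mem ha.1 hb.2, J.add_mem ha.2 hb.1⟩

theorem smul_add_subset_productSums_add {I J : TwoSidedIdeal R} {x : R}
    (hx : x ∈ (I : Set R) ∩ J) :
    x • ((I : Set R) + J) ⊆ (productSums I J : Set R) + productSums J I := by
  rintro _ ⟨_, ⟨a, ha, b, hb, rfl⟩, rfl⟩
  show x * (a + b) ∈ _
  rw [mul_add, add_comm (x * a)]
  exact Set.add_mem_add (AddSubmonoid.subset_closure ⟨x, hx.1, b, hb, rfl⟩)
    (AddSubmonoid.subset_closure ⟨x, hx.2, a, ha, rfl⟩)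

theorem inter_subset_closure_productSums_add [TopologicalSpace R] [IsTopologicalRing R]
    {I J : TwoSidedIdeal R} (hTCM : closure ((I : Set R) + (J : Set R)) = Set.univ) :
    (I : Set R) ∩ J ⊆ closure ((productSums I J : Set R) + productSums J I) := fun x hx =>
  closure_mono (smul_add_subset_productSums_add hx)
    (mem_closure_smul_of_one_mem_closure (hTCM ▸ Set.mem_univ 1) x)

end TwoSidedIdeal

theorem prod_add_prod_dense_in_inter_general {R : Type*} [Ring R] [TopologicalSpace R]
    [IsTopologicalRing R] (I J : TwoSidedIdeal R)
    (hTCM : closure ((I : Set R) + (J : Set R)) = Set.univ) :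
    ((I : Set R) ∩ (J : Set R) ⊆
      closure ((AddSubmonoid.closure {x : R | ∃ i ∈ I, ∃ j ∈ J, x = i * j} : Set R)
        + (AddSubmonoid.closure {x : R | ∃ j ∈ J, ∃ i ∈ I, x = j * i} : Set R))) ∧
    (IsClosed (I : Set R) → IsClosed (J : Set R) →
      closure ((AddSubmonoid.closure {x : R | ∃ i ∈ I, ∃ j ∈ J, x = i * j} : Set R)
        + (AddSubmonoid.closure {x : R | ∃ j ∈ J, ∃ i ∈ I, x = j * i} : Set R))
        = (I : Set R) ∩ (J : Set R)) := by
  have hdense := TwoSidedIdeal.inter_subset_closure_productSums_add hTCM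
  refine ⟨hdense, fun hI hJ => subset_antisymm ?_ hdense⟩
  exact closure_minimal (TwoSidedIdeal.productSums_add_productSums_subset_inter I J) (hI.inter hJ)

/-- If `I` and `J` are topologically co-maximal two-sided ideals of a topological ring `R`,
then `IJ + JI` (finite sums of products) is dense in `I ∩ J`; if moreover `I` and `J` are
closed, the closure of `IJ + JI` equals `I ∩ J`. -/
theorem prod_add_prod_dense_in_inter {R : Type*} [Ring R] [TopologicalSpace R]
    [IsTopologicalRing R] [T2Space R] (I J : TwoSidedIdeal R)
    (hTCM : closure ((I : Set R) + (J : Set R)) = Set.univ) :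
    ((I : Set R) ∩ (J : Set R) ⊆
      closure ((AddSubmonoid.closure {x : R | ∃ i ∈ I, ∃ j ∈ J, x = i * j} : Set R)
        + (AddSubmonoid.closure {x : R | ∃ j ∈ J, ∃ i ∈ I, x = j * i} : Set R))) ∧
    (IsClosed (I : Set R) → IsClosed (J : Set R) →
      closure ((AddSubmonoid.closure {x : R | ∃ i ∈ I, ∃ j ∈ J, x = i * j} : Set R)
        + (AddSubmonoid.closure {x : R | ∃ j ∈ J, ∃ i ∈ I, x = j * i} : Set R))
        = (I : Set R) ∩ (J : Set R)) :=
  prod_add_prod_dense_in_inter_general I J hTCM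
end

section
/- Let R be a topological ring with identity and let I₁, …, Iₙ be two-sided ideals of R that are pairwise co-maximal (i.e. Iₖ + Iₗ = R for all k ≠ l). Then for every neighborhood ε of 0 in R there exists a neighborhood δ of 0 such that ⋂ₖ₌₁ⁿ (Iₖ + δ) ⊆ (⋂ₖ₌₁ⁿ Iₖ) + ε. -/
/-!
Comaximality gives elements `e k` with `e k ≡ 1 (mod I k)` and `e k ∈ I l` for `l ≠ k`.
If `x = a k + d k` with `a k ∈ I k` for every `k`, then
`x - ∑ k, d k * e k = x * (1 - ∑ k, e k) + ∑ k, a k * e k` lies in every `I m`, while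
`∑ k, d k * e k` is as small as we like once all `d k` are small, by continuity.
-/

open Pointwise

namespace TwoSidedIdeal

variable {R ι : Type*} [Ring R]

theorem exists_one_sub_mem_and_forall_mem_of_comaximal (I : ι → TwoSidedIdeal R) {k : ι}
    (s : Finset ι) (hks : k ∉ s) (h : ∀ l ∈ s, (I k : Set R) + (I l : Set R) = Set.univ) :
    ∃ e : R, 1 - e ∈ I k ∧ ∀ l ∈ s, e ∈ I l := by
  classical
  induction s using Finset.induction with
  | empty => exact ⟨1, by simp, by simp⟩
  | @insert l s hls ih =>
    obtain ⟨e, he_one, he_mem⟩ :=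
      ih (fun hk => hks (Finset.mem_insert_of_mem hk)) fun m hm => h m (Finset.mem_insert_of_mem hm)
    obtain ⟨a, ha, b, hb, hab⟩ : (1 : R) ∈ (I k : Set R) + (I l : Set R) := by
      rw [h l (Finset.mem_insert_self l s)]; trivial
    refine ⟨e * b, ?_, ?_⟩
    · have hdecomp : 1 - e * b = (1 - e) + e * a := by
        rw [← sub_eq_of_eq_add' hab.symm]; noncomm_ring
      rw [hdecomp]
      exact (I k).add_mem he_one ((I k).mul_mem_left _ _ ha)
    · intro m hm
      rcases Finset.mem_insert.1 hm with rfl | hms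
      · exact (I m).mul_mem_left _ _ hb
      · exact (I m).mul_mem_right _ _ (he_mem m hms)

variable [Fintype ι] {I : ι → TwoSidedIdeal R} {e : ι → R}

theorem exists_one_sub_mem_and_mem_of_pairwise_comaximal
    (h : ∀ k l, k ≠ l → (I k : Set R) + (I l : Set R) = Set.univ) (k : ι) :
    ∃ e : R, 1 - e ∈ I k ∧ ∀ l, l ≠ k → e ∈ I l := by
  classical
  obtain ⟨e, he_one, he_mem⟩ := exists_one_sub_mem_and_forall_mem_of_comaximal I
    (Finset.univ.erase k) (Finset.notMem_erase k _)
    fun l hl => h k l (Finset.ne_of_mem_erase hl).symm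
  exact ⟨e, he_one, fun l hl => he_mem l (Finset.mem_erase.2 ⟨hl, Finset.mem_univ l⟩)⟩

theorem one_sub_sum_mem (he_one : ∀ k, 1 - e k ∈ I k) (he_mem : ∀ k l, l ≠ k → e k ∈ I l)
    (m : ι) : 1 - ∑ k, e k ∈ I m := by
  classical
  rw [← Finset.add_sum_erase _ _ (Finset.mem_univ m), sub_add_eq_sub_sub]
  exact (I m).sub_mem (he_one m) <|
    (I m).finsetSum_mem _ _ fun k hk => he_mem k m (Finset.ne_of_mem_erase hk).symm

theorem sub_sum_mul_mem (he_one : ∀ k, 1 - e k ∈ I k) (he_mem : ∀ k l, l ≠ k → e k ∈ I l)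
    {x : R} {d : ι → R} (hd : ∀ k, x - d k ∈ I k) (m : ι) :
    x - ∑ k, d k * e k ∈ I m := by
  have hdecomp : x - ∑ k, d k * e k = x * (1 - ∑ k, e k) + ∑ k, (x - d k) * e k := by
    simp only [mul_sub, sub_mul, Finset.mul_sum, Finset.sum_sub_distrib, mul_one]
    abel
  rw [hdecomp]
  refine (I m).add_mem ((I m).mul_mem_left _ _ (one_sub_sum_mem he_one he_mem m)) ?_
  refine (I m).finsetSum_mem _ _ fun k _ => ?_
  by_cases hkm : k = m
  · subst hkm; exact (I k).mul_mem_right _ _ (hd k)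
  · exact (I m).mul_mem_left _ _ (he_mem k m (Ne.symm hkm))

end TwoSidedIdeal

theorem exists_nhds_zero_forall_sum_mul_mem {R ι : Type*} [Ring R] [TopologicalSpace R]
    [IsTopologicalRing R] [Fintype ι] (e : ι → R) {ε : Set R} (hε : ε ∈ nhds (0 : R)) :
    ∃ δ ∈ nhds (0 : R), ∀ d : ι → R, (∀ k, d k ∈ δ) → ∑ k, d k * e k ∈ ε := by
  have hcont : Continuous fun d : ι → R => ∑ k, d k * e k := by fun_prop
  have hpre : (fun d : ι → R => ∑ k, d k * e k) ⁻¹' ε ∈ nhds (0 : ι → R) :=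
    hcont.continuousAt (by simpa using hε)
  obtain ⟨S, t, ht, hSt⟩ := Filter.mem_pi'.1 (nhds_pi (a := (0 : ι → R)) ▸ hpre)
  exact ⟨⋂ k, t k, Filter.iInter_mem.2 ht, fun d hd =>
    hSt fun k _ => Set.mem_iInter.1 (hd k) k⟩

theorem inter_nhds_of_pairwise_comaximal_general {R : Type*} [Ring R] [TopologicalSpace R]
    [IsTopologicalRing R] {n : ℕ} (I : Fin n → TwoSidedIdeal R)
    (h : ∀ k l : Fin n, k ≠ l → (I k : Set R) + (I l : Set R) = Set.univ) :
    ∀ ε ∈ nhds (0 : R), ∃ δ ∈ nhds (0 : R),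
      (⋂ k, ((I k : Set R) + δ)) ⊆ (⋂ k, (I k : Set R)) + ε := by
  intro ε hε
  choose e he_one he_mem using TwoSidedIdeal.exists_one_sub_mem_and_mem_of_pairwise_comaximal h
  obtain ⟨δ, hδ, hsmall⟩ := exists_nhds_zero_forall_sum_mul_mem e hε
  refine ⟨δ, hδ, fun x hx => ?_⟩
  choose a ha d hd hadx using fun k => Set.mem_add.1 (Set.mem_iInter.1 hx k)
  have hsub : ∀ k, x - d k ∈ I k := fun k => by rw [← hadx k, add_sub_cancel_right]; exact ha k
  exact ⟨x - ∑ k, d k * e k,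
    Set.mem_iInter.2 (TwoSidedIdeal.sub_sum_mul_mem he_one he_mem hsub),
    ∑ k, d k * e k, hsmall d hd, sub_add_cancel _ _⟩

/-- If `I 0, …, I (n-1)` are pairwise co-maximal two-sided ideals of a topological ring `R`,
then for every neighborhood `ε` of `0` there is a neighborhood `δ` of `0` with
`⋂ k (I k + δ) ⊆ (⋂ k I k) + ε`. -/
theorem inter_nhds_of_pairwise_comaximal {R : Type*} [Ring R] [TopologicalSpace R]
    [IsTopologicalRing R] [T2Space R] {n : ℕ} (I : Fin n → TwoSidedIdeal R)
    (h : ∀ k l : Fin n, k ≠ l → (I k : Set R) + (I l : Set R) = Set.univ) :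
    ∀ ε ∈ nhds (0 : R), ∃ δ ∈ nhds (0 : R),
      (⋂ k, ((I k : Set R) + δ)) ⊆ (⋂ k, (I k : Set R)) + ε :=
  inter_nhds_of_pairwise_comaximal_general I h
end

section
/- Let R be a topological ring with identity and let I₁, …, Iₙ be two-sided ideals of R that are pairwise topologically co-maximal. Then the canonical ring homomorphism φ : R → ∏ₖ₌₁ⁿ R/Iₖ defined by φ(r) = (r + Iₖ)ₖ has dense image in ∏ₖ₌₁ⁿ R/Iₖ, where each R/Iₖ carries the quotient topology and the product carries the product topology. -/
/-!
Let `J k` be the intersection of the `I l` with `l ≠ k`. For two-sided ideals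
`(I + J) * (I + K) ⊆ I + J ⊓ K`, so by continuity of multiplication density of `I + J` and of
`I + K` passes to `I + J ⊓ K`, and induction gives density of `I k + J k`. Any `y = i + j` in
`I k + J k` satisfies `Pi.single k y ≡ (j, …, j)` modulo `∏ I l`. Hence the closure of the
`R`-submodule of `R^ι` of vectors congruent to a constant contains the standard basis, so this
submodule is dense; its image under the continuous surjection `R^ι → ∏ R / I k` is the range of
the diagonal map, which is therefore dense.
-/

open Pointwise

instance ringConQuotientTopology {R : Type*} [Ring R] [TopologicalSpace R] (c : RingCon R) :
    TopologicalSpace c.Quotient :=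
  TopologicalSpace.coinduced c.mk' inferInstance

open Set

namespace TwoSidedIdeal

variable {R : Type*} [Ring R]

theorem mul_mem_add_inf {I J K : TwoSidedIdeal R} {a b : R}
    (ha : a ∈ (I : Set R) + (J : Set R)) (hb : b ∈ (I : Set R) + (K : Set R)) :
    a * b ∈ (I : Set R) + ((J ⊓ K : TwoSidedIdeal R) : Set R) := by
  obtain ⟨i, hi, j, hj, rfl⟩ := ha
  obtain ⟨i', hi', k, hk, rfl⟩ := hb
  refine ⟨i * (i' + k) + j * i', ?_, j * k, ⟨J.mul_mem_right _ _ hj, K.mul_mem_left _ _ hk⟩,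
    by noncomm_ring⟩
  exact I.add_mem (I.mul_mem_right _ _ hi) (I.mul_mem_left _ _ hi')

section Approximation

variable {ι : Type*} (I : ι → TwoSidedIdeal R)

/-- The preimage in `R^ι` of the range of the diagonal map `R → ∏ k, R ⧸ I k`. -/
def constSupPi : Submodule R (ι → R) :=
  (R ∙ (1 : ι → R)) ⊔ Submodule.pi univ fun k => asIdeal (I k)

theorem single_mem_constSupPi [Fintype ι] [DecidableEq ι] {k : ι} {y : R}
    (hy : y ∈ (I k : Set R) + (((Finset.univ.erase k).inf I : TwoSidedIdeal R) : Set R)) :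
    Pi.single k y ∈ constSupPi I := by
  obtain ⟨i, hi, j, hj, rfl⟩ := hy
  have hjI : ∀ l, l ≠ k → j ∈ I l := fun l hl =>
    Finset.inf_le (f := I) (Finset.mem_erase.mpr ⟨hl, Finset.mem_univ l⟩) hj
  refine Submodule.mem_sup.mpr ⟨j • 1, Submodule.smul_mem _ j (Submodule.mem_span_singleton_self _),
    Pi.single k (i + j) - j • 1, fun l _ => ?_, add_sub_cancel _ _⟩
  change _ ∈ asIdeal (I l)
  rw [mem_asIdeal]
  rcases eq_or_ne l k with rfl | hl
  · simpa using hi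
  · simpa [hl] using hjI l hl

theorem mk_mem_range_of_mem_constSupPi {a : ι → R} (ha : a ∈ constSupPi I) :
    (fun k => (I k).ringCon.mk' (a k)) ∈ range fun r k => (I k).ringCon.mk' r := by
  obtain ⟨_, hc, b, hb, rfl⟩ := Submodule.mem_sup.mp ha
  obtain ⟨r, rfl⟩ := Submodule.mem_span_singleton.mp hc
  refine ⟨r, funext fun k => (RingCon.eq _).mpr (((I k).rel_iff _ _).mpr ?_)⟩
  simpa using hb k trivial

end Approximation

section Topology

variable [TopologicalSpace R]

theorem dense_add_inf [ContinuousMul R] {I J K : TwoSidedIdeal R}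
    (hJ : Dense ((I : Set R) + (J : Set R))) (hK : Dense ((I : Set R) + (K : Set R))) :
    Dense ((I : Set R) + ((J ⊓ K : TwoSidedIdeal R) : Set R)) := fun x => by
  simpa using map_mem_closure₂ continuous_mul (hJ x) (hK 1) fun _ ha _ hb => mul_mem_add_inf ha hb

theorem dense_add_finsetInf [ContinuousMul R] {ι : Type*} (I : ι → TwoSidedIdeal R) {k : ι}
    {S : Finset ι} (h : ∀ l ∈ S, Dense ((I k : Set R) + (I l : Set R))) :
    Dense ((I k : Set R) + ((S.inf I : TwoSidedIdeal R) : Set R)) := by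
  classical
  induction S using Finset.induction_on with
  | empty => simp only [Finset.inf_empty, coe_top, add_univ ⟨0, (I k).zero_mem⟩, dense_univ]
  | insert l S _ ih =>
    rw [Finset.inf_insert]
    exact dense_add_inf (h l (Finset.mem_insert_self l S))
      (ih fun l' hl' => h l' (Finset.mem_insert_of_mem hl'))

theorem dense_constSupPi [IsTopologicalRing R] {ι : Type*} [Finite ι] (I : ι → TwoSidedIdeal R)
    (h : Pairwise fun k l => Dense ((I k : Set R) + (I l : Set R))) :
    Dense (constSupPi I : Set (ι → R)) := by
  classical
  have := Fintype.ofFinite ι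
  have hsingle : ∀ k, Pi.single k 1 ∈ (constSupPi I).topologicalClosure := fun k =>
    map_mem_closure (continuous_single (A := fun _ : ι => R) k)
      (dense_add_finsetInf I (fun l hl => h (Finset.ne_of_mem_erase hl).symm) 1)
      fun y hy => single_mem_constSupPi I hy
  have htop : (constSupPi I).topologicalClosure = ⊤ := by
    rw [eq_top_iff, ← (Pi.basisFun R ι).span_eq, Submodule.span_le]
    rintro _ ⟨k, rfl⟩
    simpa only [Pi.basisFun_apply, SetLike.mem_coe] using hsingle k
  rw [dense_iff_closure_eq, ← Submodule.topologicalClosure_coe, htop, Submodule.top_coe]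

end Topology

end TwoSidedIdeal

theorem finite_crat_dense_general {R : Type*} [Ring R] [TopologicalSpace R] [IsTopologicalRing R]
    {n : ℕ} (I : Fin n → TwoSidedIdeal R)
    (h : ∀ k l : Fin n, k ≠ l → closure ((I k : Set R) + (I l : Set R)) = Set.univ) :
    DenseRange (fun r (k : Fin n) => (I k).ringCon.mk' r) := by
  have hπ : Continuous fun (a : Fin n → R) k => (I k).ringCon.mk' (a k) :=
    continuous_pi fun k => continuous_coinduced_rng.comp (continuous_apply k)
  have hπ_surj : Function.Surjective fun (a : Fin n → R) k => (I k).ringCon.mk' (a k) :=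
    Function.Surjective.piMap fun k => (I k).ringCon.mk'_surjective
  have hD := TwoSidedIdeal.dense_constSupPi I fun k l hkl => dense_iff_closure_eq.mpr (h k l hkl)
  refine (hπ_surj.denseRange.dense_image hπ hD).mono ?_
  rintro _ ⟨a, ha, rfl⟩
  exact TwoSidedIdeal.mk_mem_range_of_mem_constSupPi I ha

/-- Finite Chinese remainder approximation theorem (density part): if `I 0, …, I (n-1)` are
pairwise topologically co-maximal two-sided ideals of a topological ring `R`, then the
canonical homomorphism `R → ∏ k, R/I k` has dense image (quotient topologies, product
topology). -/
theorem finite_crat_dense {R : Type*} [Ring R] [TopologicalSpace R] [IsTopologicalRing R]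
    [T2Space R] {n : ℕ} (I : Fin n → TwoSidedIdeal R)
    (h : ∀ k l : Fin n, k ≠ l → closure ((I k : Set R) + (I l : Set R)) = Set.univ) :
    DenseRange (fun r (k : Fin n) => (I k).ringCon.mk' r) :=
  finite_crat_dense_general I h
end

section
/- Let R be a topological ring with identity and let I₁, …, Iₙ be two-sided ideals of R that are pairwise co-maximal (Iₖ + Iₗ = R for all k ≠ l). Then the canonical ring homomorphism φ : R → ∏ₖ₌₁ⁿ R/Iₖ defined by φ(r) = (r + Iₖ)ₖ is an open map onto its image φ(R) (with the topology induced from the product of the quotient topologies). -/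
/-! Pairwise co-maximality yields `e k ∈ R` with `φ (e k) = Pi.single k 1` (a product of elements
that are `1` modulo `I k` and `0` modulo `I l`). For fixed `x : R`, the continuous map
`v ↦ x + ∑ k, e k * (v k - x)` from `Fin n → R` to `R` passes through `x`, and composed with `φ` it is
the product of the quotient maps, which is open. Hence `φ` maps neighbourhoods of `x` onto
neighbourhoods of `φ x`. -/

open Pointwise

theorem IsOpenMap.of_continuous_lifts {X Y Z : Type*} [TopologicalSpace X] [TopologicalSpace Y]
    [TopologicalSpace Z] {f : X → Y} {p : Z → Y} (hp : IsOpenMap p)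
    (h : ∀ x, ∃ g : Z → X, Continuous g ∧ f ∘ g = p ∧ x ∈ Set.range g) : IsOpenMap f := by
  intro U hU
  refine isOpen_iff_forall_mem_open.2 ?_
  rintro _ ⟨x, hx, rfl⟩
  obtain ⟨g, hg, hfg, z, rfl⟩ := h x
  refine ⟨p '' (g ⁻¹' U), ?_, hp _ (hU.preimage hg), z, hx, by rw [← hfg]; rfl⟩
  rintro _ ⟨w, hw, rfl⟩
  exact ⟨g w, hw, congrFun hfg w⟩

namespace TwoSidedIdeal

variable {R : Type*} [Ring R]

theorem ringCon_mk'_eq_zero_iff (I : TwoSidedIdeal R) {x : R} : I.ringCon.mk' x = 0 ↔ x ∈ I := by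
  rw [← mem_ker, ker_ringCon_mk']

theorem ringCon_mk'_eq_iff (I : TwoSidedIdeal R) {x y : R} :
    I.ringCon.mk' x = I.ringCon.mk' y ↔ x - y ∈ I :=
  (RingCon.eq _).trans (rel_iff I x y)

theorem preimage_image_ringCon_mk' (I : TwoSidedIdeal R) (V : Set R) :
    I.ringCon.mk' ⁻¹' (I.ringCon.mk' '' V) = V + (I : Set R) := by
  ext r
  simp only [Set.mem_preimage, Set.mem_image, Set.mem_add, SetLike.mem_coe]
  refine ⟨fun ⟨v, hv, hvr⟩ => ⟨v, hv, r - v, ?_, add_sub_cancel v r⟩,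
    fun ⟨v, hv, i, hi, hvir⟩ => ⟨v, hv, ?_⟩⟩
  · rwa [← ringCon_mk'_eq_iff, eq_comm]
  · rw [ringCon_mk'_eq_iff, ← hvir, sub_add_cancel_left]
    exact I.neg_mem hi

theorem isOpenMap_ringCon_mk' [TopologicalSpace R] [ContinuousAdd R] (I : TwoSidedIdeal R) :
    IsOpenMap I.ringCon.mk' := fun V hV =>
  isOpen_coinduced.2 (by rw [preimage_image_ringCon_mk']; exact hV.add_right)

theorem exists_ringCon_mk'_eq_one_and_eq_zero {I J : TwoSidedIdeal R}
    (h : (I : Set R) + (J : Set R) = Set.univ) :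
    ∃ b, I.ringCon.mk' b = 1 ∧ J.ringCon.mk' b = 0 := by
  obtain ⟨a, ha, b, hb, hab⟩ := Set.mem_add.1 (h.symm ▸ Set.mem_univ (1 : R))
  refine ⟨b, ?_, (ringCon_mk'_eq_zero_iff J).2 hb⟩
  rw [← map_one I.ringCon.mk', ringCon_mk'_eq_iff, ← hab, sub_add_cancel_right]
  exact I.neg_mem ha

end TwoSidedIdeal

namespace RingHom

variable {R ι : Type*} {S : ι → Type*} [DecidableEq ι] [Fintype ι]

theorem pi_sum_mul_of_pi_eq_single [Semiring R] [∀ i, Semiring (S i)] (f : ∀ i, R →+* S i)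
    {e : ι → R} (he : ∀ i, RingHom.pi f (e i) = Pi.single i 1) (v : ι → R) :
    RingHom.pi f (∑ i, e i * v i) = Pi.map (fun i => f i) v := by
  simp only [map_sum, map_mul, he, ← Pi.single_mul_left, one_mul, RingHom.pi_apply]
  exact Finset.univ_sum_single _

theorem exists_pi_eq_single [Semiring R] [∀ i, Semiring (S i)] (f : ∀ i, R →+* S i)
    (h : ∀ k l, k ≠ l → ∃ b, f k b = 1 ∧ f l b = 0) (k : ι) :
    ∃ e, RingHom.pi f e = Pi.single k 1 := by
  have hsep : ∀ s : Finset ι, k ∉ s → ∃ e, f k e = 1 ∧ ∀ l ∈ s, f l e = 0 := by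
    intro s
    induction s using Finset.induction_on with
    | empty => exact fun _ => ⟨1, map_one _, by simp⟩
    | insert l s _ ih =>
      intro hk
      obtain ⟨e, hek, hes⟩ := ih (fun h => hk (Finset.mem_insert_of_mem h))
      obtain ⟨b, hbk, hbl⟩ := h k l (fun h => hk (h ▸ Finset.mem_insert_self k s))
      refine ⟨e * b, by rw [map_mul, hek, hbk, one_mul], ?_⟩
      intro m hm
      rcases Finset.mem_insert.1 hm with rfl | hm
      · rw [map_mul, hbl, mul_zero]
      · rw [map_mul, hes m hm, zero_mul]
  obtain ⟨e, hek, hes⟩ := hsep (Finset.univ.erase k) (Finset.notMem_erase k _)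
  refine ⟨e, funext fun l => ?_⟩
  rcases eq_or_ne l k with rfl | hl
  · simpa using hek
  · simpa [hl] using hes l (Finset.mem_erase.2 ⟨hl, Finset.mem_univ l⟩)

theorem isOpenMap_pi [Ring R] [TopologicalSpace R] [IsTopologicalRing R] [∀ i, Ring (S i)]
    [∀ i, TopologicalSpace (S i)] (f : ∀ i, R →+* S i) (hf : ∀ i, IsOpenMap (f i))
    (he : ∀ i, ∃ e, RingHom.pi f e = Pi.single i 1) : IsOpenMap (RingHom.pi f) := by
  choose e he using he
  refine .of_continuous_lifts (.piMap hf (by simp [Filter.cofinite_eq_bot])) fun x =>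
    ⟨fun v => x + ∑ i, e i * (v i - x), by fun_prop, ?_, fun _ => x, by simp⟩
  funext v
  rw [Function.comp_apply, map_add, RingHom.pi_sum_mul_of_pi_eq_single f he]
  ext i
  simp

end RingHom

theorem finite_crat_open_general {R : Type*} [Ring R] [TopologicalSpace R] [IsTopologicalRing R]
    {n : ℕ} (I : Fin n → TwoSidedIdeal R)
    (h : ∀ k l : Fin n, k ≠ l → (I k : Set R) + (I l : Set R) = Set.univ) :
    IsOpenMap (Set.rangeFactorization (fun r (k : Fin n) => (I k).ringCon.mk' r)) := by
  have hφ : IsOpenMap (RingHom.pi fun k => (I k).ringCon.mk') :=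
    RingHom.isOpenMap_pi _ (fun k => (I k).isOpenMap_ringCon_mk') <|
      RingHom.exists_pi_eq_single _ fun k l hkl =>
        TwoSidedIdeal.exists_ringCon_mk'_eq_one_and_eq_zero (h k l hkl)
  exact hφ.codRestrict _

/-- Finite Chinese remainder approximation theorem (openness part): if `I 0, …, I (n-1)` are
pairwise co-maximal two-sided ideals of a topological ring `R`, then the canonical
homomorphism `φ : R → ∏ k, R/I k` is open onto its image `φ(R)` (with the topology induced
from the product of the quotient topologies). -/
theorem finite_crat_open {R : Type*} [Ring R] [TopologicalSpace R] [IsTopologicalRing R]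
    [T2Space R] {n : ℕ} (I : Fin n → TwoSidedIdeal R)
    (h : ∀ k l : Fin n, k ≠ l → (I k : Set R) + (I l : Set R) = Set.univ) :
    IsOpenMap (Set.rangeFactorization (fun r (k : Fin n) => (I k).ringCon.mk' r)) :=
  finite_crat_open_general I h
end

section
/- Let R be a topological ring with identity, let (A, ≤) be a directed set, and let {Iₐ}ₐ, {Jₐ}ₐ be nets of closed two-sided ideals of R converging in the hyperspace sense to closed two-sided ideals I and J respectively. If Iₐ and Jₐ are topologically co-maximal for every α, then I and J are topologically co-maximal. -/
open Pointwise

/-!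
Given a neighbourhood `W` of `0`, choose `V` with `V + V ⊆ W` and an index `c` with
`I_c ⊆ I + V` and `J_c ⊆ J + V`. Then the dense set `I_c + J_c` lies in `(I + J) + W`, and a set
that is `W`-close to a dense set for every `W` is itself dense.
-/

open Filter Topology

section TopologicalAddGroup

variable {G : Type*} [AddCommGroup G] [TopologicalSpace G] [IsTopologicalAddGroup G]

theorem dense_of_forall_nhds_zero_exists_dense_subset_add {D : Set G}
    (h : ∀ W ∈ 𝓝 (0 : G), ∃ E, Dense E ∧ E ⊆ D + W) : Dense D := by
  intro x
  rw [mem_closure_iff_nhds_zero]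
  intro U hU
  obtain ⟨V, hV, hVU⟩ := exists_nhds_zero_half hU
  obtain ⟨E, hE, hED⟩ := h (-V) (neg_mem_nhds_zero G hV)
  obtain ⟨e, he, hex⟩ := mem_closure_iff_nhds_zero.1 (hE x) V hV
  obtain ⟨d, hd, w, hw, rfl⟩ := hED he
  refine ⟨d, hd, ?_⟩
  have hdx : d - x = (d + w - x) + -w := by abel
  exact hdx ▸ hVU _ hex _ hw

theorem dense_add_of_forall_dense_add_of_eventually_subset_add {A : Type*} [Preorder A]
    (hdir : ∀ a b : A, ∃ c, a ≤ c ∧ b ≤ c) {S T : A → Set G} {S₀ T₀ : Set G}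
    (hS : ∀ ε ∈ 𝓝 (0 : G), ∃ a₀ : A, ∀ a, a₀ ≤ a → S a ⊆ S₀ + ε)
    (hT : ∀ ε ∈ 𝓝 (0 : G), ∃ a₀ : A, ∀ a, a₀ ≤ a → T a ⊆ T₀ + ε)
    (hdense : ∀ a, Dense (S a + T a)) : Dense (S₀ + T₀) := by
  refine dense_of_forall_nhds_zero_exists_dense_subset_add fun W hW => ?_
  obtain ⟨V, hVo, hV₀, hVW⟩ := exists_open_nhds_zero_add_subset hW
  have hV : V ∈ 𝓝 (0 : G) := hVo.mem_nhds hV₀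
  obtain ⟨a₁, ha₁⟩ := hS V hV
  obtain ⟨a₂, ha₂⟩ := hT V hV
  obtain ⟨c, hc₁, hc₂⟩ := hdir a₁ a₂
  refine ⟨S c + T c, hdense c, ?_⟩
  calc S c + T c ⊆ (S₀ + V) + (T₀ + V) := Set.add_subset_add (ha₁ c hc₁) (ha₂ c hc₂)
    _ = (S₀ + T₀) + (V + V) := add_add_add_comm _ _ _ _
    _ ⊆ (S₀ + T₀) + W := Set.add_subset_add_left hVW

end TopologicalAddGroup

theorem tcm_closed_relation_general {R : Type*} [Ring R] [TopologicalSpace R] [IsTopologicalRing R]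
    {A : Type*} [Preorder A]
    (hdir : ∀ a b : A, ∃ c, a ≤ c ∧ b ≤ c)
    (Inet Jnet : A → TwoSidedIdeal R) (I J : TwoSidedIdeal R)
    (hIconv : ∀ ε ∈ nhds (0 : R), ∃ a₀ : A, ∀ a, a₀ ≤ a →
      (I : Set R) ⊆ (Inet a : Set R) + ε ∧ (Inet a : Set R) ⊆ (I : Set R) + ε)
    (hJconv : ∀ ε ∈ nhds (0 : R), ∃ a₀ : A, ∀ a, a₀ ≤ a →
      (J : Set R) ⊆ (Jnet a : Set R) + ε ∧ (Jnet a : Set R) ⊆ (J : Set R) + ε)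
    (hTCM : ∀ a, closure ((Inet a : Set R) + (Jnet a : Set R)) = Set.univ) :
    closure ((I : Set R) + (J : Set R)) = Set.univ :=
  (dense_add_of_forall_dense_add_of_eventually_subset_add hdir
    (fun ε hε => (hIconv ε hε).imp fun _ h a ha => (h a ha).2)
    (fun ε hε => (hJconv ε hε).imp fun _ h a ha => (h a ha).2)
    fun a => dense_iff_closure_eq.2 (hTCM a)).closure_eq

/-- Topological co-maximality is a closed relation on closed two-sided ideals: if nets
`{Iₐ}`, `{Jₐ}` of closed two-sided ideals (indexed by a directed set) converge in the
hyperspace sense to closed two-sided ideals `I` and `J` respectively, and `Iₐ ⊥ Jₐ` for all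
`α`, then `I ⊥ J`. -/
theorem tcm_closed_relation {R : Type*} [Ring R] [TopologicalSpace R] [IsTopologicalRing R]
    [T2Space R] {A : Type*} [Preorder A] [Nonempty A]
    (hdir : ∀ a b : A, ∃ c, a ≤ c ∧ b ≤ c)
    (Inet Jnet : A → TwoSidedIdeal R) (I J : TwoSidedIdeal R)
    (hInetC : ∀ a, IsClosed (Inet a : Set R)) (hJnetC : ∀ a, IsClosed (Jnet a : Set R))
    (hIC : IsClosed (I : Set R)) (hJC : IsClosed (J : Set R))
    (hIconv : ∀ ε ∈ nhds (0 : R), ∃ a₀ : A, ∀ a, a₀ ≤ a →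
      (I : Set R) ⊆ (Inet a : Set R) + ε ∧ (Inet a : Set R) ⊆ (I : Set R) + ε)
    (hJconv : ∀ ε ∈ nhds (0 : R), ∃ a₀ : A, ∀ a, a₀ ≤ a →
      (J : Set R) ⊆ (Jnet a : Set R) + ε ∧ (Jnet a : Set R) ⊆ (J : Set R) + ε)
    (hTCM : ∀ a, closure ((Inet a : Set R) + (Jnet a : Set R)) = Set.univ) :
    closure ((I : Set R) + (J : Set R)) = Set.univ :=
  tcm_closed_relation_general hdir Inet Jnet I J hIconv hJconv hTCM
end

section
/- Let R and S be topological rings with identity and let φ : R → S be a surjective, continuous, open ring homomorphism. If R is supercomplete, then S is supercomplete. -/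
open Pointwise

/-- A net of subsets of a topological ring, indexed by a preordered set, is Cauchy in the
hyperspace sense. -/
def IsCauchySetNet {R : Type*} [TopologicalSpace R] [Zero R] [Add R] {A : Type*} [Preorder A]
    (S : A → Set R) : Prop :=
  ∀ ε ∈ nhds (0 : R), ∃ a₀ : A, ∀ a b : A, a₀ ≤ a → a₀ ≤ b →
    S a ⊆ S b + ε ∧ S b ⊆ S a + ε

/-- A net of subsets of a topological ring converges in the hyperspace sense to `T`. -/
def SetNetConvergesTo {R : Type*} [TopologicalSpace R] [Zero R] [Add R] {A : Type*} [Preorder A]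
    (S : A → Set R) (T : Set R) : Prop :=
  ∀ ε ∈ nhds (0 : R), ∃ a₀ : A, ∀ a : A, a₀ ≤ a → T ⊆ S a + ε ∧ S a ⊆ T + ε

/-- A topological ring is supercomplete if every Cauchy net (indexed by a directed set) of
nonempty closed subsets converges in the hyperspace sense to some nonempty closed subset. -/
def Supercomplete (R : Type*) [TopologicalSpace R] [Zero R] [Add R] : Prop :=
  ∀ (A : Type) (_ : Preorder A) (_ : Nonempty A),
    (∀ a b : A, ∃ c, a ≤ c ∧ b ≤ c) →
    ∀ S : A → Set R, (∀ a, IsClosed (S a) ∧ (S a).Nonempty) → IsCauchySetNet S →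
      ∃ T : Set R, IsClosed T ∧ T.Nonempty ∧ SetNetConvergesTo S T

open Set Topology

/-! Pull the Cauchy net back along `φ`: preimages of closed sets are closed, and since `φ` is open,
`X ⊆ Y + φ '' ε` downstairs gives `φ⁻¹' X ⊆ φ⁻¹' Y + ε` upstairs. Its limit `T` in `R` pushes
forward by continuity to a limit `φ '' T` of the original net, which need not be closed; but a
hyperspace limit may be replaced by its closure, since `closure T ⊆ T + δ` for every
neighbourhood `δ` of `0`. -/

section IsTopologicalAddGroup

variable {G : Type*} [AddGroup G] [TopologicalSpace G] [IsTopologicalAddGroup G]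

theorem closure_subset_add_of_mem_nhds_zero (X : Set G) {ε : Set G} (hε : ε ∈ 𝓝 0) :
    closure X ⊆ X + ε :=
  (closure_subset_add_right_of_mem_nhds_zero_of_neg X
    (Filter.inter_mem hε (neg_mem_nhds_zero G hε))
    fun _ hx => ⟨by simpa using hx.2, by simpa using hx.1⟩).trans
    (add_subset_add_left inter_subset_left)

theorem SetNetConvergesTo.closure {A : Type*} [Preorder A] {S : A → Set G} {T : Set G}
    (h : SetNetConvergesTo S T) : SetNetConvergesTo S (closure T) := by
  intro ε hε
  obtain ⟨δ, hδ_open, hδ_zero, hδε⟩ := exists_open_nhds_zero_add_subset hε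
  have hδ_sub : δ ⊆ ε := (subset_add_right δ hδ_zero).trans hδε
  have hδ : δ ∈ 𝓝 0 := hδ_open.mem_nhds hδ_zero
  obtain ⟨a₀, ha₀⟩ := h δ hδ
  refine ⟨a₀, fun a ha => ⟨?_, ?_⟩⟩
  · calc _root_.closure T ⊆ T + δ := closure_subset_add_of_mem_nhds_zero T hδ
      _ ⊆ S a + δ + δ := add_subset_add_right (ha₀ a ha).1
      _ ⊆ S a + ε := by rw [add_assoc]; exact add_subset_add_left hδε
  · exact (ha₀ a ha).2.trans (add_subset_add subset_closure hδ_sub)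

end IsTopologicalAddGroup

section AddMonoidHomClass

variable {F G H : Type*} [AddGroup G] [AddGroup H] [FunLike F G H] [AddMonoidHomClass F G H]

theorem preimage_subset_preimage_add_of_subset_add (φ : F) {X Y : Set H} {ε : Set G}
    (h : X ⊆ Y + φ '' ε) : φ ⁻¹' X ⊆ φ ⁻¹' Y + ε := by
  intro x hx
  obtain ⟨y, hy, _, ⟨e, he, rfl⟩, hxe⟩ := h hx
  refine ⟨x - e, ?_, e, he, sub_add_cancel x e⟩
  rwa [mem_preimage, map_sub, ← hxe, add_sub_cancel_right]

variable [TopologicalSpace G] [TopologicalSpace H] {A : Type*} [Preorder A] {φ : F}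

theorem IsCauchySetNet.preimage_of_isOpenMap {S : A → Set H} (hS : IsCauchySetNet S)
    (hφ : IsOpenMap φ) : IsCauchySetNet fun a => φ ⁻¹' S a := by
  intro ε hε
  obtain ⟨a₀, ha₀⟩ := hS (φ '' ε) (by simpa using hφ.image_mem_nhds hε)
  exact ⟨a₀, fun a b ha hb => ⟨preimage_subset_preimage_add_of_subset_add φ (ha₀ a b ha hb).1,
    preimage_subset_preimage_add_of_subset_add φ (ha₀ a b ha hb).2⟩⟩

theorem SetNetConvergesTo.image {S : A → Set G} {T : Set G} (h : SetNetConvergesTo S T)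
    (hφ : Continuous φ) : SetNetConvergesTo (fun a => φ '' S a) (φ '' T) := by
  intro ε hε
  obtain ⟨a₀, ha₀⟩ := h (φ ⁻¹' ε) (hφ.continuousAt.preimage_mem_nhds (by simpa using hε))
  have image_add_preimage {X Y : Set G} (hXY : X ⊆ Y + φ ⁻¹' ε) : φ '' X ⊆ φ '' Y + ε := by
    grw [hXY, image_add, image_preimage_subset]
  exact ⟨a₀, fun a ha => ⟨image_add_preimage (ha₀ a ha).1, image_add_preimage (ha₀ a ha).2⟩⟩

end AddMonoidHomClass

theorem supercomplete_of_surjective_open_general {R S : Type*}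
    [Ring R] [TopologicalSpace R]
    [Ring S] [TopologicalSpace S] [IsTopologicalRing S]
    (φ : R →+* S) (hsurj : Function.Surjective φ) (hcont : Continuous φ)
    (hopen : IsOpenMap φ) (hR : Supercomplete R) : Supercomplete S := by
  intro A _ hA hdir N hN hcauchy
  obtain ⟨T, -, hT, hconv⟩ := hR A _ hA hdir (fun a => φ ⁻¹' N a)
    (fun a => ⟨(hN a).1.preimage hcont, (hN a).2.preimage hsurj⟩)
    (hcauchy.preimage_of_isOpenMap hopen)
  refine ⟨closure (φ '' T), isClosed_closure, (hT.image φ).closure, ?_⟩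
  simpa only [image_preimage_eq _ hsurj] using (hconv.image hcont).closure

/-- The image of a supercomplete topological ring under a surjective, continuous, open ring
homomorphism is supercomplete. -/
theorem supercomplete_of_surjective_open {R S : Type*}
    [Ring R] [TopologicalSpace R] [IsTopologicalRing R] [T2Space R]
    [Ring S] [TopologicalSpace S] [IsTopologicalRing S] [T2Space S]
    (φ : R →+* S) (hsurj : Function.Surjective φ) (hcont : Continuous φ)
    (hopen : IsOpenMap φ) (hR : Supercomplete R) : Supercomplete S :=
  supercomplete_of_surjective_open_general φ hsurj hcont hopen hR
end

section
/- Let R be a ring with identity and let V be a pseudo-valuation on R. If I is a left ideal of R that is (V, δ)-dense in R for some 0 < δ < 1, then I is V-dense in R, i.e. for every r ∈ R and every ε > 0 there exists r′ ∈ I with V(r − r′) < ε. -/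
open Pointwise

/-- Let `V` be a pseudo-valuation on a ring `R` and `I` a left ideal of `R` that is
`(V, δ)`-dense in `R` for some `0 < δ < 1`. Then `I` is `V`-dense in `R`: for every `r ∈ R`
and `ε > 0` there is `r' ∈ I` with `V (r - r') < ε`. -/
theorem vdense_of_vdelta_dense {R : Type*} [Ring R] (V : R → ℝ)
    (hnn : ∀ x, 0 ≤ V x)
    (hadd : ∀ x y, V (x + y) ≤ V x + V y)
    (hmul : ∀ x y, V (x * y) ≤ V x * V y)
    (hneg : ∀ x, V (-x) = V x)
    (hzero : V 0 = 0)
    (I : Ideal R) (δ : ℝ) (hδ0 : 0 < δ) (hδ1 : δ < 1)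
    (hdense : ∀ r : R, ∃ a ∈ I, V (r - a) < δ) :
    ∀ r : R, ∀ ε > 0, ∃ r' ∈ I, V (r - r') < ε := by
  intro r ε hε
  obtain ⟨b, hbI, hb⟩ := hdense 1
  have key : ∀ n : ℕ, ∃ a ∈ I, V (r - a) < δ ^ (n + 1) := by
    intro n
    induction n with
    | zero =>
      obtain ⟨a, haI, ha⟩ := hdense r
      exact ⟨a, haI, by simpa using ha⟩
    | succ n ih =>
      obtain ⟨a, haI, ha⟩ := ih
      refine ⟨a + (r - a) * b, I.add_mem haI (I.smul_mem (r - a) hbI), ?_⟩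
      have h1 : r - (a + (r - a) * b) = (r - a) * (1 - b) := by noncomm_ring
      rw [h1]
      calc V ((r - a) * (1 - b)) ≤ V (r - a) * V (1 - b) := hmul _ _
        _ < δ ^ (n + 1) * δ := by
            apply mul_lt_mul' (le_of_lt ha) hb (hnn _)
            positivity
        _ = δ ^ (n + 1 + 1) := by ring
  obtain ⟨n, hn⟩ := exists_pow_lt_of_lt_one hε hδ1
  obtain ⟨a, haI, ha⟩ := key n
  exact ⟨a, haI, ha.trans_le ((pow_le_pow_of_le_one hδ0.le hδ1.le (Nat.le_succ n)).trans hn.le)⟩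
end

section
/- Let R be a ring with identity, let V be a pseudo-valuation on R, and let I, J be two-sided ideals of R. If I + J is V-dense in R and J is (V, δ)-dense in R for some 0 < δ < 1, then I ∩ J is V-dense in I, i.e. for every x ∈ I and every ε > 0 there exists y ∈ I ∩ J with V(x − y) < ε. -/
open Pointwise

/-- Let `V` be a pseudo-valuation on a ring `R` and `I, J` two-sided ideals. If `I + J` is
`V`-dense in `R` and `J` is `(V, δ)`-dense in `R` for some `0 < δ < 1`, then `I ∩ J` is
`V`-dense in `I`: for every `x ∈ I` and `ε > 0` there is `y ∈ I ∩ J` with `V (x - y) < ε`. -/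
theorem inter_vdense_in_left {R : Type*} [Ring R] (V : R → ℝ)
    (hnn : ∀ x, 0 ≤ V x)
    (hadd : ∀ x y, V (x + y) ≤ V x + V y)
    (hmul : ∀ x y, V (x * y) ≤ V x * V y)
    (hneg : ∀ x, V (-x) = V x)
    (hzero : V 0 = 0)
    (I J : TwoSidedIdeal R) (δ : ℝ) (hδ0 : 0 < δ) (hδ1 : δ < 1)
    (hsum : ∀ r : R, ∀ ε > 0, ∃ a ∈ I, ∃ b ∈ J, V (r - (a + b)) < ε)
    (hJ : ∀ r : R, ∃ b ∈ J, V (r - b) < δ) :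
    ∀ x ∈ I, ∀ ε > 0, ∃ y, y ∈ I ∧ y ∈ J ∧ V (x - y) < ε := by
  intro x hx ε hε
  obtain ⟨e, heJ, he⟩ := hJ 1
  set u : R := 1 - e with hu
  -- (1 - e)^n = 1 - jₙ with jₙ ∈ J
  have hpow : ∀ n : ℕ, ∃ j ∈ J, u ^ n = 1 - j := by
    intro n
    induction n with
    | zero => exact ⟨0, J.zero_mem, by simp⟩
    | succ n ih =>
      obtain ⟨j, hjJ, hj⟩ := ih
      refine ⟨e + j - j * e, ?_, ?_⟩
      · exact J.sub_mem (J.add_mem heJ hjJ) (J.mul_mem_right _ _ hjJ)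
      · rw [pow_succ, hj, hu]; noncomm_ring
  -- V (u ^ n) ≤ δ ^ n for n ≥ 1
  have hVu : ∀ n : ℕ, 1 ≤ n → V (u ^ n) ≤ δ ^ n := by
    intro n hn
    induction n with
    | zero => omega
    | succ n ih =>
      rcases Nat.eq_or_lt_of_le hn with h | h
      · obtain rfl : n = 0 := by omega
        simpa using le_of_lt he
      · have h1 : 1 ≤ n := by omega
        calc V (u ^ (n + 1)) = V (u ^ n * u) := by rw [pow_succ]
          _ ≤ V (u ^ n) * V u := hmul _ _
          _ ≤ δ ^ n * δ := by
              exact mul_le_mul (ih h1) (le_of_lt he) (hnn _) (le_of_lt (pow_pos hδ0 n))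
          _ = δ ^ (n + 1) := (pow_succ δ n).symm
  -- choose n ≥ 1 with V x * δ ^ n < ε
  obtain ⟨m, hm⟩ : ∃ m : ℕ, V x * δ ^ m < ε := by
    rcases eq_or_lt_of_le (hnn x) with h0 | h0
    · exact ⟨1, by rw [← h0]; simpa using hε⟩
    · obtain ⟨m, hm⟩ := exists_pow_lt_of_lt_one (div_pos hε h0) hδ1
      exact ⟨m, by rwa [lt_div_iff₀ h0, mul_comm] at hm⟩
  have hδm : δ ^ (m + 1) ≤ δ ^ m :=
    pow_le_pow_of_le_one (le_of_lt hδ0) (le_of_lt hδ1) (by omega)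
  obtain ⟨j, hjJ, hj⟩ := hpow (m + 1)
  refine ⟨x * j, I.mul_mem_right _ _ hx, J.mul_mem_left _ _ hjJ, ?_⟩
  have key : x - x * j = x * u ^ (m + 1) := by rw [hj]; noncomm_ring
  calc V (x - x * j) = V (x * u ^ (m + 1)) := by rw [key]
    _ ≤ V x * V (u ^ (m + 1)) := hmul _ _
    _ ≤ V x * δ ^ (m + 1) := mul_le_mul_of_nonneg_left (hVu _ (by omega)) (hnn x)
    _ ≤ V x * δ ^ m := mul_le_mul_of_nonneg_left hδm (hnn x)
    _ < ε := hm
end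

section
/- Let R be a ring with identity, let V be a pseudo-valuation on R, and let I₁, …, Iₙ be two-sided ideals of R such that for all k ≠ l the sum Iₖ + Iₗ is V-dense in R. If each Iₖ is (V, δ)-dense in R for some 0 < δ < 1, then the intersection ⋂ₖ₌₁ⁿ Iₖ is V-dense in R. -/
/-!
A pseudo-valuation is precisely a `RingSeminorm` `p`. If `p (1 - a) < 1` for some `a ∈ I`, then
`1 - (1 - a) ^ n ∈ I` and `p ((1 - a) ^ n) ≤ p (1 - a) ^ n`, so `I` contains elements arbitrarily
close to `1`. This property passes to finite intersections because
`1 - a b = (1 - a) + (1 - b) - (1 - a)(1 - b)`, and an ideal with it is dense, since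
`r - a r = (1 - a) r`.
-/

namespace TwoSidedIdeal

variable {R : Type*} [Ring R]

def ApproximatesOne (I : TwoSidedIdeal R) (p : RingSeminorm R) : Prop :=
  ∀ ε > 0, ∃ a ∈ I, p (1 - a) < ε

theorem one_sub_pow_mem {I : TwoSidedIdeal R} {a : R} (ha : a ∈ I) (n : ℕ) :
    1 - (1 - a) ^ n ∈ I := by
  rw [← mul_neg_geom_sum, sub_sub_cancel]
  exact I.mul_mem_right _ _ ha

variable {p : RingSeminorm R}

theorem approximatesOne_of_lt_one {I : TwoSidedIdeal R} {a : R} (ha : a ∈ I)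
    (h : p (1 - a) < 1) : I.ApproximatesOne p := by
  intro ε hε
  obtain ⟨n, hn⟩ := exists_pow_lt_of_lt_one hε h
  refine ⟨1 - (1 - a) ^ (n + 1), one_sub_pow_mem ha (n + 1), ?_⟩
  calc p (1 - (1 - ((1 - a) ^ (n + 1)))) = p ((1 - a) ^ (n + 1)) := by rw [sub_sub_cancel]
    _ ≤ p (1 - a) ^ (n + 1) := map_pow_le_pow p _ n.succ_ne_zero
    _ ≤ p (1 - a) ^ n := pow_le_pow_of_le_one (apply_nonneg p _) h.le n.le_succ
    _ < ε := hn

theorem _root_.RingSeminorm.map_one_sub_mul_le (p : RingSeminorm R) (a b : R) :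
    p (1 - a * b) ≤ p (1 - a) + p (1 - b) + p (1 - a) * p (1 - b) := by
  calc p (1 - a * b) = p ((1 - a) + (1 - b) - (1 - a) * (1 - b)) := by noncomm_ring
    _ ≤ p ((1 - a) + (1 - b)) + p ((1 - a) * (1 - b)) := map_sub_le_add p _ _
    _ ≤ p (1 - a) + p (1 - b) + p (1 - a) * p (1 - b) :=
      add_le_add (map_add_le_add p _ _) (map_mul_le_mul p _ _)

theorem approximatesOne_top : (⊤ : TwoSidedIdeal R).ApproximatesOne p :=
  fun _ hε => ⟨1, mem_top R, by simpa using hε⟩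

theorem ApproximatesOne.inf {I J : TwoSidedIdeal R} (hI : I.ApproximatesOne p)
    (hJ : J.ApproximatesOne p) : (I ⊓ J).ApproximatesOne p := by
  intro ε hε
  obtain ⟨a, ha, hpa⟩ := hI (min 1 (ε / 3)) (by positivity)
  obtain ⟨b, hb, hpb⟩ := hJ (min 1 (ε / 3)) (by positivity)
  refine ⟨a * b, (mem_inf R).2 ⟨I.mul_mem_right _ _ ha, J.mul_mem_left _ _ hb⟩, ?_⟩
  have ha₁ := hpa.trans_le (min_le_left _ _)
  have ha₃ := hpa.trans_le (min_le_right _ _)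
  have hb₃ := hpb.trans_le (min_le_right _ _)
  have hab : p (1 - a) * p (1 - b) < ε / 3 := by
    nlinarith [apply_nonneg p (1 - a), apply_nonneg p (1 - b)]
  linarith [p.map_one_sub_mul_le a b]

theorem ApproximatesOne.iInf {ι : Type*} [Finite ι] {I : ι → TwoSidedIdeal R}
    (hI : ∀ i, (I i).ApproximatesOne p) : (⨅ i, I i).ApproximatesOne p :=
  InfClosed.iInf_mem (s := {J : TwoSidedIdeal R | J.ApproximatesOne p})
    (fun _ hJ _ hK => ApproximatesOne.inf hJ hK) approximatesOne_top hI

theorem ApproximatesOne.exists_mem_sub_lt {I : TwoSidedIdeal R} (hI : I.ApproximatesOne p)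
    (r : R) {ε : ℝ} (hε : 0 < ε) : ∃ x ∈ I, p (r - x) < ε := by
  have hr : 0 < p r + 1 := by linarith [apply_nonneg p r]
  obtain ⟨a, ha, hpa⟩ := hI (ε / (p r + 1)) (by positivity)
  refine ⟨a * r, I.mul_mem_right _ _ ha, ?_⟩
  calc p (r - a * r) = p ((1 - a) * r) := by noncomm_ring
    _ ≤ p (1 - a) * p r := map_mul_le_mul p _ _
    _ ≤ p (1 - a) * (p r + 1) := by gcongr; linarith [apply_nonneg p (1 - a)]
    _ < ε := (lt_div_iff₀ hr).1 hpa

end TwoSidedIdeal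

open TwoSidedIdeal in
theorem inter_vdense_of_pairwise_general {R : Type*} [Ring R] (V : R → ℝ)
    (hadd : ∀ x y, V (x + y) ≤ V x + V y)
    (hmul : ∀ x y, V (x * y) ≤ V x * V y)
    (hneg : ∀ x, V (-x) = V x)
    (hzero : V 0 = 0)
    {n : ℕ} (I : Fin n → TwoSidedIdeal R) (δ : ℝ) (hδ1 : δ < 1)
    (hdense : ∀ k : Fin n, ∀ r : R, ∃ a ∈ I k, V (r - a) < δ) :
    ∀ r : R, ∀ ε > 0, ∃ x : R, (∀ k, x ∈ I k) ∧ V (r - x) < ε := by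
  let p : RingSeminorm R :=
    { toFun := V, map_zero' := hzero, add_le' := hadd, neg' := hneg, mul_le' := hmul }
  have hI : (⨅ k, I k).ApproximatesOne p := ApproximatesOne.iInf fun k => by
    obtain ⟨a, ha, hpa⟩ := hdense k 1
    exact approximatesOne_of_lt_one ha (hpa.trans hδ1)
  intro r ε hε
  obtain ⟨x, hx, hpx⟩ := hI.exists_mem_sub_lt r hε
  exact ⟨x, (mem_iInf R).1 hx, hpx⟩

/-- Let `V` be a pseudo-valuation on a ring `R` and `I 0, …, I (n-1)` two-sided ideals such
that for `k ≠ l` the sum `I k + I l` is `V`-dense in `R`. If each `I k` is `(V, δ)`-dense in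
`R` for some `0 < δ < 1`, then the intersection `⋂ k, I k` is `V`-dense in `R`. -/
theorem inter_vdense_of_pairwise {R : Type*} [Ring R] (V : R → ℝ)
    (hnn : ∀ x, 0 ≤ V x)
    (hadd : ∀ x y, V (x + y) ≤ V x + V y)
    (hmul : ∀ x y, V (x * y) ≤ V x * V y)
    (hneg : ∀ x, V (-x) = V x)
    (hzero : V 0 = 0)
    {n : ℕ} (I : Fin n → TwoSidedIdeal R) (δ : ℝ) (hδ0 : 0 < δ) (hδ1 : δ < 1)
    (hsum : ∀ k l : Fin n, k ≠ l → ∀ r : R, ∀ ε > 0,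
      ∃ a ∈ I k, ∃ b ∈ I l, V (r - (a + b)) < ε)
    (hdense : ∀ k : Fin n, ∀ r : R, ∃ a ∈ I k, V (r - a) < δ) :
    ∀ r : R, ∀ ε > 0, ∃ x : R, (∀ k, x ∈ I k) ∧ V (r - x) < ε :=
  inter_vdense_of_pairwise_general V hadd hmul hneg hzero I δ hδ1 hdense
end

section
/- Let R be a topological ring with identity and let 𝓘 be a family of closed two-sided ideals of R that are pairwise topologically co-maximal and satisfy: for every neighborhood ε of 0, the set of I ∈ 𝓘 with I + ε ≠ R is finite. On the ring Π = ∏_{I ∈ 𝓘} R/I define, for each neighborhood ε of 0 in R, the set U(ε) = {(a_I + I)_{I ∈ 𝓘} : a_I ∈ I + ε for all I ∈ 𝓘}. Then the family {U(ε)}_{ε ∈ N(0)} is a fundamental system of neighborhoods of 0 for a Hausdorff ring topology on Π. -/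
/-!
Give each `R ⧸ I` the quotient topology. The projection `R → R ⧸ I` is then an open quotient
map, so `R ⧸ I` is a topological ring, Hausdorff when `I` is closed, and the product topology on
`Π` is a Hausdorff ring topology. Its neighbourhoods of `0` are exactly those containing some
`U(ε)`: by the finiteness hypothesis `U(ε)` restricts only the finitely many coordinates with
`I + ε ≠ R`, so it is a basic product neighbourhood; conversely, a basic product neighbourhood
restricting finitely many coordinates to images of `ε_I` contains `U(⋂ ε_I)`.
-/

open Pointwise Topology Filter Set

namespace RingCon

variable {R : Type*} [Ring R] [TopologicalSpace R] (c : RingCon R)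

instance : TopologicalSpace c.Quotient := .coinduced c.mk' ‹_›

theorem isOpenQuotientMap_mk' [ContinuousAdd R] : IsOpenQuotientMap c.mk' :=
  AddMonoidHom.isOpenQuotientMap_of_isQuotientMap ⟨⟨rfl⟩, c.mk'_surjective⟩

instance [IsTopologicalRing R] : IsTopologicalRing c.Quotient :=
  have hq := c.isOpenQuotientMap_mk'.prodMap c.isOpenQuotientMap_mk'
  IsTopologicalSemiring.toIsTopologicalRing
    { continuous_add :=
        hq.continuous_comp_iff.1 <| c.isOpenQuotientMap_mk'.continuous.comp continuous_add
      continuous_mul :=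
        hq.continuous_comp_iff.1 <| c.isOpenQuotientMap_mk'.continuous.comp continuous_mul }

theorem nhds_zero_eq_map [ContinuousAdd R] : 𝓝 (0 : c.Quotient) = Filter.map c.mk' (𝓝 0) := by
  rw [c.isOpenQuotientMap_mk'.map_nhds_eq, map_zero]

end RingCon

namespace TwoSidedIdeal

section Quotient

variable {R : Type*} [Ring R] (I : TwoSidedIdeal R)

theorem mk'_eq_zero_iff {x : R} : I.ringCon.mk' x = 0 ↔ x ∈ I := I.ringCon.eq

theorem image_mk'_eq_zero : I.ringCon.mk' '' (I : Set R) = 0 := by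
  refine eq_singleton_iff_unique_mem.2 ⟨⟨0, I.zero_mem, map_zero _⟩, ?_⟩
  rintro _ ⟨x, hx, rfl⟩
  exact I.mk'_eq_zero_iff.2 hx

theorem image_mk'_add (s : Set R) : I.ringCon.mk' '' ((I : Set R) + s) = I.ringCon.mk' '' s := by
  rw [Set.image_add, image_mk'_eq_zero, zero_add]

theorem image_mk'_eq_univ {s : Set R} (hs : (I : Set R) + s = univ) :
    I.ringCon.mk' '' s = univ := by
  rw [← image_mk'_add, hs, image_univ_of_surjective I.ringCon.mk'_surjective]

theorem t2Space_quotient [TopologicalSpace R] [IsTopologicalRing R] (hI : IsClosed (I : Set R)) :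
    T2Space I.ringCon.Quotient := by
  rw [IsTopologicalAddGroup.t2Space_iff_zero_closed,
    ← I.ringCon.isOpenQuotientMap_mk'.isQuotientMap.isClosed_preimage]
  convert hI
  exact Set.ext fun _ ↦ I.mk'_eq_zero_iff

end Quotient

theorem hasBasis_nhds_zero_pi_quotient {R ι : Type*} [Ring R] [TopologicalSpace R]
    [ContinuousAdd R] (I : ι → TwoSidedIdeal R)
    (hfin : ∀ ε ∈ 𝓝 (0 : R), {i | (I i : Set R) + ε ≠ univ}.Finite) :
    (𝓝 (0 : ∀ i, (I i).ringCon.Quotient)).HasBasis (· ∈ 𝓝 (0 : R))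
      fun ε ↦ {x | ∀ i, x i ∈ (I i).ringCon.mk' '' ((I i : Set R) + ε)} := by
  have hpi := hasBasis_pi_same_index (f := fun i ↦ 𝓝 (0 : (I i).ringCon.Quotient))
    (fun i ↦ (I i).ringCon.nhds_zero_eq_map ▸ (basis_sets (𝓝 (0 : R))).map (I i).ringCon.mk')
    fun F ε hF hε ↦ ⟨⋂ i ∈ F, ε i, (biInter_mem hF).2 hε,
      fun i hi ↦ image_mono (biInter_subset_of_mem hi)⟩
  rw [nhds_pi]
  refine hpi.to_hasBasis (fun ⟨F, ε⟩ ⟨_, hε⟩ ↦ ⟨ε, hε, fun x hx i _ ↦ ?_⟩)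
    fun ε hε ↦ ⟨({i | (I i : Set R) + ε ≠ univ}, ε), ⟨hfin ε hε, hε⟩, fun x hx i ↦ ?_⟩
  · simpa only [image_mk'_add] using hx i
  · rw [image_mk'_add]
    by_cases hi : (I i : Set R) + ε = univ
    · exact (I i).image_mk'_eq_univ hi ▸ mem_univ _
    · exact hx i hi

end TwoSidedIdeal

theorem product_topology_fundamental_system_general {R : Type*} [Ring R] [TopologicalSpace R]
    [IsTopologicalRing R] (𝓘 : Set (TwoSidedIdeal R))
    (hclosed : ∀ I ∈ 𝓘, IsClosed (I : Set R))
    (hfin : ∀ ε ∈ nhds (0 : R), {I ∈ 𝓘 | (I : Set R) + ε ≠ Set.univ}.Finite) :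
    ∃ t : TopologicalSpace (∀ I : 𝓘, (I : TwoSidedIdeal R).ringCon.Quotient),
      @IsTopologicalRing _ t _ ∧ @T2Space _ t ∧
      (@nhds _ t 0).HasBasis (fun ε : Set R => ε ∈ nhds (0 : R))
        (fun ε => {x : ∀ I : 𝓘, (I : TwoSidedIdeal R).ringCon.Quotient |
          ∀ I : 𝓘, ∃ a ∈ ((I : TwoSidedIdeal R) : Set R) + ε, (I : TwoSidedIdeal R).ringCon.mk' a = x I}) := by
  have : ∀ I : 𝓘, T2Space (I : TwoSidedIdeal R).ringCon.Quotient :=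
    fun I ↦ TwoSidedIdeal.t2Space_quotient I.1 (hclosed I I.2)
  refine ⟨inferInstance, inferInstance, inferInstance,
    TwoSidedIdeal.hasBasis_nhds_zero_pi_quotient Subtype.val fun ε hε ↦ ?_⟩
  exact (hfin ε hε).preimage Subtype.val_injective.injOn |>.subset fun I hI ↦ ⟨I.2, hI⟩

/-- Let `𝓘` be a family of closed two-sided ideals of a topological ring `R`, pairwise
topologically co-maximal, such that for every neighborhood `ε` of `0` only finitely many
`I ∈ 𝓘` fail to satisfy `I + ε = R`. Then on `Π = ∏_{I ∈ 𝓘} R/I` the sets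
`U(ε) = {(a_I + I)_I : a_I ∈ I + ε for all I}`, for `ε` a neighborhood of `0` in `R`, form a
fundamental system of neighborhoods of `0` for a Hausdorff ring topology. -/
theorem product_topology_fundamental_system {R : Type*} [Ring R] [TopologicalSpace R]
    [IsTopologicalRing R] [T2Space R] (𝓘 : Set (TwoSidedIdeal R))
    (hclosed : ∀ I ∈ 𝓘, IsClosed (I : Set R))
    (hTCM : 𝓘.Pairwise fun I J => closure ((I : Set R) + (J : Set R)) = Set.univ)
    (hfin : ∀ ε ∈ nhds (0 : R), {I ∈ 𝓘 | (I : Set R) + ε ≠ Set.univ}.Finite) :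
    ∃ t : TopologicalSpace (∀ I : 𝓘, (I : TwoSidedIdeal R).ringCon.Quotient),
      @IsTopologicalRing _ t _ ∧ @T2Space _ t ∧
      (@nhds _ t 0).HasBasis (fun ε : Set R => ε ∈ nhds (0 : R))
        (fun ε => {x : ∀ I : 𝓘, (I : TwoSidedIdeal R).ringCon.Quotient |
          ∀ I : 𝓘, ∃ a ∈ ((I : TwoSidedIdeal R) : Set R) + ε, (I : TwoSidedIdeal R).ringCon.mk' a = x I}) :=
  product_topology_fundamental_system_general 𝓘 hclosed hfin
end

section
/- Let Ω ⊆ ℂ be a nonempty open connected set and let {zₙ}ₙ∈ℕ be a sequence of points of Ω having no accumulation point in Ω. Let {mₙ}ₙ∈ℕ be a sequence of positive integers and for each n let Iₙ be the ideal of the ring A(Ω) of analytic functions on Ω consisting of all functions of the form (z − zₙ)^{mₙ}·g(z) with g analytic on Ω. Then for every compact set K ⊆ Ω and every ε > 0 there exists n₀ ∈ ℕ such that for all n ≥ n₀ and every analytic function f on Ω there exists an analytic function g on Ω with sup_{z ∈ K} |f(z) − (z − zₙ)^{mₙ} g(z)| < ε. (That is, Iₙ converges to A(Ω) in the hyperspace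 sense for the compact–open topology.) -/
/-!
If `a ∉ Ω` is much closer to `ζ` than to `K`, then on `K` the function `(w - ζ) / (w - a)`
is within `1/2` of `1`, so partial sums of the geometric series of its inverse give analytic
approximate inverses of `w - ζ` on `K`; when `ζ` is far from `K`, `-(w - ζ) / ζ` plays the same
role. Since `zₙ` eventually leaves every compact subset of `Ω`, one of the two situations occurs
for all large `n`. Raising the approximate inverse to the power `mₙ` and multiplying by `f`
gives `g`.
-/

open Filter Metric

theorem IsCompact.eventually_notMem_of_forall_not_mapClusterPt {X ι : Type*}
    [TopologicalSpace X] {s : Set X} {l : Filter ι} {u : ι → X} (hs : IsCompact s)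
    (h : ∀ x ∈ s, ¬MapClusterPt x l u) : ∀ᶠ i in l, u i ∉ s := by
  by_contra hfreq
  obtain ⟨x, hx, hux⟩ :=
    hs.exists_mapClusterPt_of_frequently ((not_eventually.mp hfreq).mono fun _ => not_not.mp)
  exact h x hx hux

/-- `1` lies in the closure of the ideal `q · A(Ω)` for uniform convergence on `K`. -/
def ApproxInvertibleOn (Ω K : Set ℂ) (q : ℂ → ℂ) : Prop :=
  ∀ δ > (0 : ℝ), ∃ h : ℂ → ℂ, DifferentiableOn ℂ h Ω ∧ ∀ w ∈ K, ‖1 - q w * h w‖ < δ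

namespace ApproxInvertibleOn

variable {Ω K : Set ℂ} {q : ℂ → ℂ}

theorem of_norm_one_sub_le {c : ℝ} (hq : DifferentiableOn ℂ q Ω) (hc : c < 1)
    (hK : ∀ w ∈ K, ‖1 - q w‖ ≤ c) : ApproxInvertibleOn Ω K q := by
  intro δ hδ
  obtain ⟨N, hN⟩ := exists_pow_lt_of_lt_one hδ hc
  refine ⟨fun w => ∑ i ∈ Finset.range N, (1 - q w) ^ i, ?_, fun w hw => ?_⟩
  · exact DifferentiableOn.fun_sum fun i _ => ((differentiableOn_const 1).sub hq).pow i
  · have hgeom := mul_neg_geom_sum (1 - q w) N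
    rw [sub_sub_cancel] at hgeom
    calc ‖1 - q w * ∑ i ∈ Finset.range N, (1 - q w) ^ i‖ = ‖1 - q w‖ ^ N := by
          rw [hgeom, sub_sub_cancel, norm_pow]
      _ ≤ c ^ N := pow_le_pow_left₀ (norm_nonneg _) (hK w hw) N
      _ < δ := hN

theorem of_mul {r : ℂ → ℂ} (h : ApproxInvertibleOn Ω K fun w => q w * r w)
    (hr : DifferentiableOn ℂ r Ω) : ApproxInvertibleOn Ω K q := by
  intro δ hδ
  obtain ⟨h, hh, hK⟩ := h δ hδ
  exact ⟨fun w => r w * h w, hr.mul hh, fun w hw => by simpa only [mul_assoc] using hK w hw⟩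

theorem sub_of_near {ζ a : ℂ} (ha : a ∉ Ω) (hK : ∀ w ∈ K, 2 * ‖ζ - a‖ < ‖w - a‖) :
    ApproxInvertibleOn Ω K fun w => w - ζ := by
  have hr : DifferentiableOn ℂ (fun w => (w - a)⁻¹) Ω :=
    (differentiableOn_id.sub_const a).inv fun w hw hwa => ha (sub_eq_zero.mp hwa ▸ hw)
  refine of_mul (of_norm_one_sub_le (c := 1 / 2) (differentiableOn_id.sub_const ζ |>.mul hr)
    (by norm_num) fun w hw => ?_) hr
  have hwa : 0 < ‖w - a‖ := (mul_nonneg zero_le_two (norm_nonneg _)).trans_lt (hK w hw)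
  have hsimp : 1 - (w - ζ) * (w - a)⁻¹ = (ζ - a) / (w - a) := by
    field_simp [norm_pos_iff.mp hwa]
    ring
  rw [hsimp, norm_div, div_le_iff₀ hwa]
  linarith [hK w hw]

theorem sub_of_far {ζ : ℂ} (hK : ∀ w ∈ K, 2 * ‖w‖ < ‖ζ‖) :
    ApproxInvertibleOn Ω K fun w => w - ζ := by
  refine of_mul (r := fun _ => -ζ⁻¹) (of_norm_one_sub_le (c := 1 / 2)
    ((differentiableOn_id.sub_const ζ).mul_const _) (by norm_num) fun w hw => ?_)
    (differentiableOn_const _)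
  have hζ : 0 < ‖ζ‖ := (mul_nonneg zero_le_two (norm_nonneg _)).trans_lt (hK w hw)
  have hsimp : 1 - (w - ζ) * -ζ⁻¹ = w / ζ := by
    field_simp [norm_pos_iff.mp hζ]
    ring
  rw [hsimp, norm_div, div_le_iff₀ hζ]
  linarith [hK w hw]

theorem pow (h : ApproxInvertibleOn Ω K q) (M : ℕ) :
    ApproxInvertibleOn Ω K fun w => q w ^ M := by
  intro η hη
  obtain ⟨δ, hδ, hpow⟩ :=
    Metric.continuousAt_iff.mp ((continuous_pow M).continuousAt (x := (1 : ℂ))) η hη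
  obtain ⟨h, hh, hK⟩ := h δ hδ
  refine ⟨fun w => h w ^ M, hh.pow M, fun w hw => ?_⟩
  have := hpow (x := q w * h w) (by rw [dist_eq_norm, norm_sub_rev]; exact hK w hw)
  rwa [dist_eq_norm, one_pow, norm_sub_rev, mul_pow] at this

theorem exists_norm_sub_mul_lt (h : ApproxInvertibleOn Ω K q) (hK : IsCompact K) (hKΩ : K ⊆ Ω)
    {f : ℂ → ℂ} (hf : DifferentiableOn ℂ f Ω) {ε : ℝ} (hε : 0 < ε) :
    ∃ g : ℂ → ℂ, DifferentiableOn ℂ g Ω ∧ ∀ w ∈ K, ‖f w - q w * g w‖ < ε := by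
  obtain ⟨C, hC⟩ := hK.exists_bound_of_continuousOn (hf.continuousOn.mono hKΩ)
  obtain ⟨h, hh, hqh⟩ := h (ε / (|C| + 1)) (by positivity)
  refine ⟨fun w => f w * h w, hf.mul hh, fun w hw => ?_⟩
  calc ‖f w - q w * (f w * h w)‖ = ‖f w‖ * ‖1 - q w * h w‖ := by
        rw [← norm_mul]; ring_nf
    _ ≤ |C| * (ε / (|C| + 1)) :=
        mul_le_mul ((hC w hw).trans (le_abs_self C)) (hqh w hw).le (norm_nonneg _) (abs_nonneg _)
    _ < ε := by
        rw [mul_div_assoc', div_lt_iff₀ (by positivity)]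
        nlinarith

end ApproxInvertibleOn

open ApproxInvertibleOn in
theorem exists_isCompact_approxInvertibleOn_sub_of_notMem {Ω K : Set ℂ} (hΩ : IsOpen Ω)
    (hK : IsCompact K) (hKΩ : K ⊆ Ω) :
    ∃ L ⊆ Ω, IsCompact L ∧ ∀ ζ ∉ L, ApproxInvertibleOn Ω K fun w => w - ζ := by
  obtain ⟨δ, hδ, hδΩ⟩ := hK.exists_thickening_subset_open hΩ hKΩ
  obtain ⟨C, hC⟩ := isBounded_iff_forall_norm_le.mp hK.isBounded
  refine ⟨closedBall 0 (2 * C) \ thickening (δ / 2) Ωᶜ, fun p ⟨_, hp⟩ => ?_,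
    (isCompact_closedBall _ _).diff isOpen_thickening, fun ζ hζ => ?_⟩
  · by_contra hpΩ
    exact hp (self_subset_thickening (by positivity) _ hpΩ)
  rw [Set.mem_sdiff, not_and_or, not_not, mem_closedBall, dist_zero_right, not_le] at hζ
  rcases hζ with hfar | hnear
  · exact sub_of_far fun w hw => by linarith [hC w hw]
  · obtain ⟨a, ha, hζa⟩ := mem_thickening_iff.mp hnear
    refine sub_of_near ha fun w hw => ?_
    have hwa : δ ≤ ‖w - a‖ := by
      by_contra! hlt
      exact ha (hδΩ (mem_thickening_iff.mpr ⟨w, hw, by rwa [dist_comm, dist_eq_norm]⟩))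
    rw [dist_eq_norm] at hζa
    linarith

theorem analytic_ideals_converge_general (Ω : Set ℂ) (hΩ : IsOpen Ω) (z : ℕ → ℂ)
    (hacc : ∀ w ∈ Ω, ¬ MapClusterPt w Filter.atTop z)
    (m : ℕ → ℕ) :
    ∀ K ⊆ Ω, IsCompact K → ∀ ε > (0 : ℝ), ∃ n₀ : ℕ, ∀ n ≥ n₀,
      ∀ f : ℂ → ℂ, DifferentiableOn ℂ f Ω →
        ∃ g : ℂ → ℂ, DifferentiableOn ℂ g Ω ∧
          ∀ w ∈ K, ‖f w - (w - z n) ^ (m n) * g w‖ < ε := by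
  intro K hKΩ hK ε hε
  obtain ⟨L, hLΩ, hL, hgood⟩ := exists_isCompact_approxInvertibleOn_sub_of_notMem hΩ hK hKΩ
  obtain ⟨n₀, hn₀⟩ := eventually_atTop.mp
    (hL.eventually_notMem_of_forall_not_mapClusterPt fun w hw => hacc w (hLΩ hw))
  exact ⟨n₀, fun n hn f hf =>
    ((hgood _ (hn₀ n hn)).pow (m n)).exists_norm_sub_mul_lt hK hKΩ hf hε⟩

/-- Let `Ω ⊆ ℂ` be a nonempty open connected set and `{zₙ}` a sequence in `Ω` with no
accumulation point in `Ω`, and let `{mₙ}` be positive integers. Then for every compact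
`K ⊆ Ω` and `ε > 0` there is `n₀` such that for all `n ≥ n₀` and every analytic `f` on `Ω`
there is an analytic `g` on `Ω` with `|f(z) - (z - zₙ)^{mₙ} g(z)| < ε` on `K`; i.e. the
ideals `Iₙ = ⟨(z - zₙ)^{mₙ}⟩` of `A(Ω)` converge to `A(Ω)` in the hyperspace sense for the
compact-open topology. -/
theorem analytic_ideals_converge (Ω : Set ℂ) (hΩ : IsOpen Ω) (hne : Ω.Nonempty)
    (hconn : IsConnected Ω) (z : ℕ → ℂ) (hz : ∀ n, z n ∈ Ω)
    (hacc : ∀ w ∈ Ω, ¬ MapClusterPt w Filter.atTop z)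
    (m : ℕ → ℕ) (hm : ∀ n, 0 < m n) :
    ∀ K ⊆ Ω, IsCompact K → ∀ ε > (0 : ℝ), ∃ n₀ : ℕ, ∀ n ≥ n₀,
      ∀ f : ℂ → ℂ, DifferentiableOn ℂ f Ω →
        ∃ g : ℂ → ℂ, DifferentiableOn ℂ g Ω ∧
          ∀ w ∈ K, ‖f w - (w - z n) ^ (m n) * g w‖ < ε :=
  analytic_ideals_converge_general Ω hΩ z hacc m
end

section
/- Let S be a commutative topological ring with identity that is topologically simple, i.e. its only closed ideals are S and {0}. Let x₁, …, xₙ ∈ S be distinct points and y₁, …, yₙ ∈ S arbitrary values. Then for every neighborhood ε of 0 in S there exists a polynomial p ∈ S[x] such that p(xᵢ) − yᵢ ∈ ε for every 1 ≤ i ≤ n. -/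
open Polynomial Finset Topology

/-!
If every closed ideal is `⊥` or `⊤`, then annihilators (which are closed) are trivial, so `S` has
no zero divisors, and the closure of the principal ideal of any nonzero element is all of `S`.
Take the Lagrange basis polynomials without their denominators, `ℓᵢ = ∏_{j ≠ i} (X - xⱼ)`: the
value `dᵢ = ℓᵢ(xᵢ)` is nonzero, so some multiple `sᵢ dᵢ` lies within `ε` of `yᵢ`, and
`p = ∑ sᵢ ℓᵢ` does the job since `ℓᵢ(xₖ) = 0` for `k ≠ i`.
-/

section ClosedIdeals

variable {S : Type*} [CommRing S] [TopologicalSpace S] [IsTopologicalRing S]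

theorem noZeroDivisors_of_forall_isClosed_ideal [T1Space S]
    (hsimple : ∀ I : Ideal S, IsClosed (I : Set S) → I = ⊥ ∨ I = ⊤) : NoZeroDivisors S := by
  refine ⟨fun {a b} hab => or_iff_not_imp_right.2 fun hb => ?_⟩
  have hclosed : IsClosed (LinearMap.ker (LinearMap.mulRight S b) : Set S) :=
    isClosed_singleton.preimage (continuous_mul_const b)
  rcases hsimple _ hclosed with hbot | htop
  · simpa [hbot] using (LinearMap.mem_ker.2 hab : a ∈ LinearMap.ker (LinearMap.mulRight S b))
  · have h1 : (1 : S) ∈ LinearMap.ker (LinearMap.mulRight S b) := htop ▸ Submodule.mem_top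
    exact absurd (by simpa using h1) hb

theorem dense_span_singleton_of_forall_isClosed_ideal
    (hsimple : ∀ I : Ideal S, IsClosed (I : Set S) → I = ⊥ ∨ I = ⊤) {a : S} (ha : a ≠ 0) :
    Dense (Ideal.span {a} : Set S) := by
  let J := (Ideal.span {a}).topologicalClosure
  have haJ : a ∈ J := Submodule.le_topologicalClosure _ (Ideal.subset_span rfl)
  rcases hsimple J (Submodule.isClosed_topologicalClosure _) with hbot | htop
  · exact absurd (Ideal.mem_bot.1 (hbot ▸ haJ)) ha
  · rw [dense_iff_closure_eq, ← Submodule.topologicalClosure_coe]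
    exact congrArg SetLike.coe htop

theorem exists_mul_sub_mem_nhds_of_forall_isClosed_ideal
    (hsimple : ∀ I : Ideal S, IsClosed (I : Set S) → I = ⊥ ∨ I = ⊤)
    {a : S} (ha : a ≠ 0) (y : S) {ε : Set S} (hε : ε ∈ 𝓝 0) : ∃ s : S, s * a - y ∈ ε := by
  have hU : (· - y) ⁻¹' ε ∈ 𝓝 y :=
    (continuous_sub_right y).continuousAt.preimage_mem_nhds (by simpa using hε)
  obtain ⟨t, hta, htU⟩ :=
    (dense_span_singleton_of_forall_isClosed_ideal hsimple ha).inter_nhds_nonempty hU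
  obtain ⟨s, rfl⟩ := Ideal.mem_span_singleton'.1 hta
  exact ⟨s, htU⟩

end ClosedIdeals

theorem Lagrange.eval_sum_C_mul_nodal_erase {R ι : Type*} [CommRing R] [Fintype ι]
    [DecidableEq ι] (v s : ι → R) (k : ι) :
    (∑ i, C (s i) * Lagrange.nodal (univ.erase i) v).eval (v k) =
      s k * (Lagrange.nodal (univ.erase k) v).eval (v k) := by
  rw [eval_finsetSum, Finset.sum_eq_single k]
  · rw [eval_mul, eval_C]
  · intro i _ hik
    rw [eval_mul, Lagrange.eval_nodal_at_node (mem_erase.2 ⟨Ne.symm hik, mem_univ k⟩), mul_zero]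
  · exact fun hk => absurd (mem_univ k) hk

/-- Approximate Lagrange interpolation in topologically simple rings: let `S` be a
commutative topological ring whose only closed ideals are `⊥` and `⊤`, let `x 0, …, x (n-1)`
be distinct points of `S` and `y 0, …, y (n-1)` arbitrary values. Then for every neighborhood
`ε` of `0` there is a polynomial `p ∈ S[X]` with `p (x i) - y i ∈ ε` for all `i`. -/
theorem approximate_lagrange_interpolation {S : Type*} [CommRing S] [TopologicalSpace S]
    [IsTopologicalRing S] [T2Space S]
    (hsimple : ∀ I : Ideal S, IsClosed (I : Set S) → I = ⊥ ∨ I = ⊤)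
    {n : ℕ} (x y : Fin n → S) (hx : Function.Injective x) :
    ∀ ε ∈ nhds (0 : S), ∃ p : Polynomial S, ∀ i : Fin n,
      Polynomial.eval (x i) p - y i ∈ ε := by
  intro ε hε
  rcases subsingleton_or_nontrivial S with hS | hS
  · exact ⟨0, fun i => Subsingleton.elim (0 : S) (eval (x i) 0 - y i) ▸ mem_of_mem_nhds hε⟩
  have := noZeroDivisors_of_forall_isClosed_ideal hsimple
  have hnode : ∀ i, (Lagrange.nodal (univ.erase i) x).eval (x i) ≠ 0 := fun i =>
    Lagrange.eval_nodal_not_at_node fun j hj => hx.ne (mem_erase.1 hj).1.symm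
  choose s hs using fun i =>
    exists_mul_sub_mem_nhds_of_forall_isClosed_ideal hsimple (hnode i) (y i) hε
  refine ⟨∑ i, C (s i) * Lagrange.nodal (univ.erase i) x, fun k => ?_⟩
  rw [Lagrange.eval_sum_C_mul_nodal_erase]
  exact hs k
end

section
/- Let Ω ⊆ ℂ be an open set and let K ⊆ Ω be a compact subset. Then there exists a compact set K̂ with K ⊆ K̂ ⊆ Ω such that K̂ is faithful to Ω, i.e. every connected component of the complement of K̂ in the Riemann sphere ℂ ∪ {∞} intersects the complement of Ω in the Riemann sphere. -/
/-!
Work in the Riemann sphere and fill in the holes of `K` that lie inside `Ω`: let `K̂` be `K`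
together with every component of its complement that misses `Ωᶜ`. The sphere is locally
connected, so these components are open and `K̂` is closed; `K̂ ⊆ Ω` avoids `∞`, so it is a
compact subset of `ℂ`. A component of the complement of `K̂` contains a component of `Kᶜ` that
meets `Ωᶜ`.
-/

open Set

/-- Via stereographic projection, `OnePoint V` is a sphere, hence a topological manifold. -/
instance OnePoint.locallyConnectedSpace_of_finiteDimensional {V : Type*} [NormedAddCommGroup V]
    [NormedSpace ℝ V] [FiniteDimensional ℝ V] : LocallyConnectedSpace (OnePoint V) :=
  have : LocallyConnectedSpace (Metric.sphere
      (0 : EuclideanSpace ℝ (Fin (Module.finrank ℝ V + 1))) 1) :=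
    ChartedSpace.locallyConnectedSpace (EuclideanSpace ℝ (Fin (Module.finrank ℝ V))) _
  (onePointEquivSphereOfFinrankEq (ι := Fin (Module.finrank ℝ V + 1))
    (by simp)).locallyConnectedSpace

section FaithfulHull

variable {X : Type*} [TopologicalSpace X] {K Ω : Set X}

def faithfulHull (K Ω : Set X) : Set X :=
  (⋃ q ∈ Ωᶜ, connectedComponentIn Kᶜ q)ᶜ

theorem subset_faithfulHull : K ⊆ faithfulHull K Ω :=
  subset_compl_comm.mp <| iUnion₂_subset fun _ _ => connectedComponentIn_subset _ _

theorem faithfulHull_subset (hKΩ : K ⊆ Ω) : faithfulHull K Ω ⊆ Ω :=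
  compl_subset_comm.mp fun _ hq => mem_biUnion hq (mem_connectedComponentIn fun h => hq (hKΩ h))

theorem isClosed_faithfulHull [LocallyConnectedSpace X] (hK : IsClosed K) :
    IsClosed (faithfulHull K Ω) :=
  isClosed_compl_iff.mpr <| isOpen_biUnion fun _ _ => hK.isOpen_compl.connectedComponentIn

theorem connectedComponentIn_compl_faithfulHull_inter_nonempty (hKΩ : K ⊆ Ω) {p : X}
    (hp : p ∉ faithfulHull K Ω) :
    (connectedComponentIn (faithfulHull K Ω)ᶜ p ∩ Ωᶜ).Nonempty := by
  obtain ⟨q, hq, hpq⟩ := mem_iUnion₂.mp (not_not.mp hp)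
  have hqK : q ∈ Kᶜ := fun h => hq (hKΩ h)
  have hsub : connectedComponentIn Kᶜ q ⊆ connectedComponentIn (faithfulHull K Ω)ᶜ p :=
    isPreconnected_connectedComponentIn.subset_connectedComponentIn hpq <| by
      rw [faithfulHull, compl_compl]
      exact subset_biUnion_of_mem (u := fun q => connectedComponentIn Kᶜ q) hq
  exact ⟨q, hsub (mem_connectedComponentIn hqK), hq⟩

end FaithfulHull

theorem exists_faithful_compact_extension_general (Ω : Set ℂ)
    (K : Set ℂ) (hK : IsCompact K) (hKΩ : K ⊆ Ω) :
    ∃ Khat : Set ℂ, IsCompact Khat ∧ K ⊆ Khat ∧ Khat ⊆ Ω ∧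
      ∀ p : OnePoint ℂ, p ∉ (fun w : ℂ => (w : OnePoint ℂ)) '' Khat →
        (connectedComponentIn ((fun w : ℂ => (w : OnePoint ℂ)) '' Khat)ᶜ p ∩
          ((fun w : ℂ => (w : OnePoint ℂ)) '' Ω)ᶜ).Nonempty := by
  set H := faithfulHull (OnePoint.some '' K) (OnePoint.some '' Ω)
  have hKΩ' : OnePoint.some '' K ⊆ OnePoint.some '' Ω := image_mono hKΩ
  have hH : IsClosed H :=
    isClosed_faithfulHull (OnePoint.isClosed_image_coe.mpr ⟨hK.isClosed, hK⟩)
  have hHΩ : H ⊆ OnePoint.some '' Ω := faithfulHull_subset hKΩ'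
  have hH_infty : OnePoint.infty ∉ H := fun h => OnePoint.infty_notMem_image_coe (hHΩ h)
  have hH_image : OnePoint.some '' (OnePoint.some ⁻¹' H) = H :=
    image_preimage_eq_of_subset (hHΩ.trans (image_subset_range _ _))
  refine ⟨OnePoint.some ⁻¹' H, ((OnePoint.isClosed_iff_of_notMem hH_infty).mp hH).2,
    image_subset_iff.mp subset_faithfulHull, ?_, ?_⟩
  · rw [← preimage_image_eq Ω OnePoint.coe_injective]
    exact preimage_mono hHΩ
  · intro p hp
    rw [hH_image] at hp ⊢
    exact connectedComponentIn_compl_faithfulHull_inter_nonempty hKΩ' hp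

/-- Every compact subset `K` of an open set `Ω ⊆ ℂ` is contained in a compact set
`K̂ ⊆ Ω` that is faithful to `Ω`: every connected component of the complement of `K̂` in the
Riemann sphere `ℂ ∪ {∞}` meets the complement of `Ω` in the Riemann sphere. -/
theorem exists_faithful_compact_extension (Ω : Set ℂ) (hΩ : IsOpen Ω)
    (K : Set ℂ) (hK : IsCompact K) (hKΩ : K ⊆ Ω) :
    ∃ Khat : Set ℂ, IsCompact Khat ∧ K ⊆ Khat ∧ Khat ⊆ Ω ∧
      ∀ p : OnePoint ℂ, p ∉ (fun w : ℂ => (w : OnePoint ℂ)) '' Khat →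
        (connectedComponentIn ((fun w : ℂ => (w : OnePoint ℂ)) '' Khat)ᶜ p ∩
          ((fun w : ℂ => (w : OnePoint ℂ)) '' Ω)ᶜ).Nonempty :=
  exists_faithful_compact_extension_general Ω K hK hKΩ
end
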